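/- arXiv:2502.07248 — 3 statements merged into one kernel-verified Lean document; each statement's English description precedes it below -/
import Mathlib

section
/- Let P_n be the path graph on n vertices with n ≥ 2 and let c be a proper coloring of P_n using exactly two colors. Then the minimum cardinality of an up-color dominating c-set of P_n is at least ⌊n/2⌋ and at most ⌈n/2⌉. -/
/-- `D` is an up-color dominating `c`-set of `G`. -/
def IsUCDomSet {V : Type*} (G : SimpleGraph V) (c : V → ℕ) (D : Finset V) : Prop :=
  (∀ v ∉ D, ∃ d ∈ D, G.Adj v d ∧ c v < c d) ∧ ∀ d ∈ D, 1 ≤ c d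

/-- The path graph on `n` vertices: `vᵢ` is adjacent to `vᵢ₊₁`. -/
def pathGr (n : ℕ) : SimpleGraph (Fin n) :=
  SimpleGraph.fromRel (fun i j => (j : ℕ) = (i : ℕ) + 1)

/-!
Let `a < b` be the two colors. A vertex of the top color `b` cannot be dominated from above, so
every up-color dominating set contains the color class of `b`; conversely that class is itself
such a set, because every vertex of the path has a neighbour and the neighbours of an `a`-vertex
have color `b`. Both color classes are independent in `P_n`, and an independent set of `P_n` has
at most `⌈n/2⌉` vertices, since `i ↦ ⌊i/2⌋` is injective on it. Hence the `b`-class has between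
`n - ⌈n/2⌉ = ⌊n/2⌋` and `⌈n/2⌉` vertices.
-/

lemma Finset.exists_lt_forall_eq_or_eq_of_card_image_eq_two {α β : Type*} [Fintype α]
    [LinearOrder β] {f : α → β} (hf : (Finset.univ.image f).card = 2) :
    ∃ a b, a < b ∧ ∀ x, f x = a ∨ f x = b := by
  obtain ⟨a, b, hab, himg⟩ := Finset.card_eq_two.mp hf
  have hmem (x : α) : f x = a ∨ f x = b := by
    simpa [himg] using Finset.mem_image_of_mem f (Finset.mem_univ x)
  rcases hab.lt_or_gt with h | h
  · exact ⟨a, b, h, hmem⟩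
  · exact ⟨b, a, h, fun x => (hmem x).symm⟩

section UCDom

variable {V : Type*} {G : SimpleGraph V} {c : V → ℕ}

lemma IsUCDomSet.filter_eq_subset [Fintype V] {D : Finset V} (hD : IsUCDomSet G c D) {b : ℕ}
    (hb : ∀ v, c v ≤ b) : Finset.univ.filter (c · = b) ⊆ D := by
  intro v hv
  by_contra hvD
  obtain ⟨d, -, -, hlt⟩ := hD.1 v hvD
  rw [(Finset.mem_filter.mp hv).2] at hlt
  exact hlt.not_ge (hb d)

lemma isUCDomSet_filter_eq_top [Fintype V] (hc : ∀ ⦃u v⦄, G.Adj u v → c u ≠ c v) {a b : ℕ}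
    (hab : a < b) (hcol : ∀ v, c v = a ∨ c v = b) (hnbr : ∀ v, ∃ w, G.Adj v w) :
    IsUCDomSet G c (Finset.univ.filter (c · = b)) := by
  refine ⟨fun v hv => ?_, fun d hd => ?_⟩
  · have hva : c v = a := (hcol v).resolve_right (by simpa using hv)
    obtain ⟨w, hvw⟩ := hnbr v
    have hwb : c w = b := (hcol w).resolve_left fun hwa => hc hvw (hva.trans hwa.symm)
    exact ⟨w, by simpa using hwb, hvw, by omega⟩
  · rw [(Finset.mem_filter.mp hd).2]
    omega

end UCDom

lemma pathGr_adj {n : ℕ} {i j : Fin n} :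
    (pathGr n).Adj i j ↔ (j : ℕ) = i + 1 ∨ (i : ℕ) = j + 1 := by
  simp only [pathGr, SimpleGraph.fromRel_adj, ne_eq, Fin.ext_iff]
  omega

lemma pathGr_exists_adj {n : ℕ} (hn : 2 ≤ n) (v : Fin n) : ∃ w, (pathGr n).Adj v w := by
  by_cases hv : (v : ℕ) + 1 < n
  · exact ⟨⟨v + 1, hv⟩, pathGr_adj.mpr (Or.inl rfl)⟩
  · exact ⟨⟨v - 1, by omega⟩, pathGr_adj.mpr (Or.inr (by simp; omega))⟩

lemma pathGr_card_le_of_isIndepSet {n : ℕ} {S : Finset (Fin n)}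
    (hS : (pathGr n).IsIndepSet (S : Set (Fin n))) : S.card ≤ (n + 1) / 2 := by
  have hmaps : Set.MapsTo (fun i : Fin n => (i : ℕ) / 2) S (Finset.range ((n + 1) / 2)) :=
    fun i _ => Finset.mem_range.mpr (by simp only; omega)
  have hinj : Set.InjOn (fun i : Fin n => (i : ℕ) / 2) S := by
    intro i hi j hj hij
    by_contra hne
    exact hS hi hj hne (pathGr_adj.mpr (by simp only at hij; omega))
  simpa using Finset.card_le_card_of_injOn _ hmaps hinj

theorem stmt_7_general (n : ℕ)
    (c : Fin n → ℕ) (hc : ∀ ⦃u v⦄, (pathGr n).Adj u v → c u ≠ c v)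
    (h2 : (Finset.univ.image c).card = 2) :
    (∀ D : Finset (Fin n), IsUCDomSet (pathGr n) c D → n / 2 ≤ D.card) ∧
      (∃ D : Finset (Fin n), IsUCDomSet (pathGr n) c D ∧ D.card ≤ (n + 1) / 2) := by
  obtain ⟨a, b, hab, hcol⟩ := Finset.exists_lt_forall_eq_or_eq_of_card_image_eq_two h2
  have hn : 2 ≤ n := by simpa [h2] using Finset.card_image_le (s := Finset.univ) (f := c)
  have htop : ∀ v, c v ≤ b := fun v => by rcases hcol v with h | h <;> omega
  have hindep_top : (pathGr n).IsIndepSet ↑(Finset.univ.filter (c · = b)) :=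
    fun u hu v hv _ huv => hc huv (by simp_all)
  have hindep_bot : (pathGr n).IsIndepSet ↑(Finset.univ.filter fun v => ¬c v = b) := by
    intro u hu v hv _ huv
    simp only [Finset.coe_filter, Finset.mem_univ, true_and, Set.mem_ofPred_eq] at hu hv
    exact hc huv (((hcol u).resolve_right hu).trans ((hcol v).resolve_right hv).symm)
  have hsplit := Finset.card_filter_add_card_filter_not (s := Finset.univ) (c · = b)
  have htop_le := pathGr_card_le_of_isIndepSet hindep_top
  have hbot_le := pathGr_card_le_of_isIndepSet hindep_bot
  rw [Finset.card_univ, Fintype.card_fin] at hsplit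
  refine ⟨fun D hD => ?_, _, isUCDomSet_filter_eq_top hc hab hcol (pathGr_exists_adj hn), htop_le⟩
  have := Finset.card_le_card (hD.filter_eq_subset htop)
  omega

theorem stmt_7 (n : ℕ) (hn : 2 ≤ n)
    (c : Fin n → ℕ) (hc : ∀ ⦃u v⦄, (pathGr n).Adj u v → c u ≠ c v)
    (h2 : (Finset.univ.image c).card = 2) :
    (∀ D : Finset (Fin n), IsUCDomSet (pathGr n) c D → n / 2 ≤ D.card) ∧
      (∃ D : Finset (Fin n), IsUCDomSet (pathGr n) c D ∧ D.card ≤ (n + 1) / 2) :=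
  stmt_7_general n c hc h2
end

section
/- Let G be a finite connected simple graph with at least 5 vertices and let c be any proper coloring of G. Then every up-color dominating c-set D of G satisfies Σ_{v∈D} c(v) ≥ max{χ(G) − 1, γ(G)}. -/
/-- `D` is a dominating set of `G`. -/
def IsDomSet {V : Type*} (G : SimpleGraph V) (D : Finset V) : Prop :=
  ∀ v ∉ D, ∃ d ∈ D, G.Adj v d

/-- The domination number of `G`. -/
noncomputable def domNum (V : Type*) [Fintype V] (G : SimpleGraph V) : ℕ :=
  sInf {n | ∃ D : Finset V, IsDomSet G D ∧ D.card = n}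

/-- The chromatic number of `G` (as a natural number). -/
noncomputable def chromNum {V : Type*} (G : SimpleGraph V) : ℕ :=
  sInf {n | G.Colorable n}

section

variable {V : Type*} {G : SimpleGraph V} {c : V → ℕ} {D : Finset V}

theorem chromNum_le_succ_of_forall_le {k : ℕ} (hc : ∀ ⦃u v⦄, G.Adj u v → c u ≠ c v)
    (hk : ∀ v, c v ≤ k) : chromNum G ≤ k + 1 :=
  Nat.sInf_le <| (G.colorable_iff_exists_bdd_nat_coloring _).2
    ⟨SimpleGraph.Coloring.mk c fun h => hc h, fun v => Nat.lt_succ_of_le (hk v)⟩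

theorem domNum_le_card [Fintype V] (hD : IsDomSet G D) : domNum V G ≤ D.card :=
  Nat.sInf_le ⟨D, hD, rfl⟩

namespace IsUCDomSet

theorem isDomSet (hD : IsUCDomSet G c D) : IsDomSet G D :=
  fun v hv => (hD.1 v hv).imp fun _ ⟨hd, hadj, _⟩ => ⟨hd, hadj⟩

theorem apply_le_sup (hD : IsUCDomSet G c D) (v : V) : c v ≤ D.sup c := by
  by_cases hv : v ∈ D
  · exact Finset.le_sup hv
  · obtain ⟨d, hd, -, hlt⟩ := hD.1 v hv
    exact hlt.le.trans (Finset.le_sup hd)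

theorem card_le_sum (hD : IsUCDomSet G c D) : D.card ≤ ∑ v ∈ D, c v := by
  simpa using D.card_nsmul_le_sum c 1 hD.2

end IsUCDomSet

end

theorem stmt_15_general {V : Type*} [Fintype V] (G : SimpleGraph V)
    (c : V → ℕ) (hc : ∀ ⦃u v⦄, G.Adj u v → c u ≠ c v)
    (D : Finset V) (hD : IsUCDomSet G c D) :
    max (chromNum G - 1) (domNum V G) ≤ ∑ v ∈ D, c v := by
  refine max_le ?_ ((domNum_le_card hD.isDomSet).trans hD.card_le_sum)
  have hchrom := chromNum_le_succ_of_forall_le hc hD.apply_le_sup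
  have hsup : D.sup c ≤ ∑ v ∈ D, c v :=
    Finset.sup_le fun v hv => Finset.single_le_sum (fun _ _ => Nat.zero_le _) hv
  omega

theorem stmt_15 {V : Type*} [Fintype V] (G : SimpleGraph V)
    (hconn : G.Connected) (hcard : 5 ≤ Fintype.card V)
    (c : V → ℕ) (hc : ∀ ⦃u v⦄, G.Adj u v → c u ≠ c v)
    (D : Finset V) (hD : IsUCDomSet G c D) :
    max (chromNum G - 1) (domNum V G) ≤ ∑ v ∈ D, c v :=
  stmt_15_general G c hc D hD
end

section
/- Let G be a finite connected simple graph with at least 5 vertices. Then there exist a proper coloring c of G and an up-color dominating c-set D of G such that 2·Σ_{v∈D} c(v) ≤ 3·(χ(G) − 1)·γ(G), i.e., the weight of D is at most (3/2)(χ(G) − 1)γ(G). -/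
open Finset

section

variable {V : Type*} {k : ℕ}

def liftColor (i : Fin k) : ℕ := if (i : ℕ) + 1 = k then i else k + i

def liftColoring [DecidableEq V] (S : Finset V) (ρ : V → Fin k) (v : V) : ℕ :=
  if v ∈ S then liftColor (ρ v) else ρ v

lemma liftColor_injective : Function.Injective (liftColor (k := k)) := by
  intro i j h
  have := i.isLt
  have := j.isLt
  unfold liftColor at h
  ext
  split_ifs at h <;> omega

lemma val_lt_liftColor_of_ne {i j : Fin k} (h : i ≠ j) : (i : ℕ) < liftColor j := by
  have := i.isLt
  have := Fin.val_ne_of_ne h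
  unfold liftColor
  split_ifs <;> omega

lemma one_le_liftColor (hk : 2 ≤ k) (i : Fin k) : 1 ≤ liftColor i := by
  unfold liftColor
  split_ifs <;> omega

lemma two_mul_sum_liftColor : 2 * ∑ i : Fin k, liftColor i = 3 * k * (k - 1) := by
  cases k with
  | zero => simp
  | succ n =>
    have hcast (i : Fin n) : liftColor i.castSucc = n + 1 + i := by
      simp [liftColor, i.isLt.ne]
    have hlast : liftColor (Fin.last n) = n := by simp [liftColor]
    have hgauss := sum_range_id_mul_two n
    rw [Fin.sum_univ_castSucc, hlast, sum_congr rfl fun i _ => hcast i,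
      Fin.sum_univ_eq_sum_range (fun i => n + 1 + i) n, sum_add_distrib, sum_const, card_range,
      smul_eq_mul, Nat.add_sub_cancel]
    cases n with
    | zero => simp
    | succ m => simp only [Nat.add_sub_cancel] at hgauss; nlinarith

lemma liftColoring_adj_ne [DecidableEq V] {G : SimpleGraph V} {S : Finset V} {ρ : V → Fin k}
    (hρ : ∀ ⦃u v⦄, G.Adj u v → ρ u ≠ ρ v) ⦃u v : V⦄ (huv : G.Adj u v) :
    liftColoring S ρ u ≠ liftColoring S ρ v := by
  have hne := hρ huv
  unfold liftColoring
  split_ifs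
  · exact liftColor_injective.ne hne
  · exact (val_lt_liftColor_of_ne hne.symm).ne'
  · exact (val_lt_liftColor_of_ne hne).ne
  · exact Fin.val_ne_of_ne hne

lemma isUCDomSet_liftColoring [DecidableEq V] {G : SimpleGraph V} {S : Finset V}
    {ρ : V → Fin k} (hk : 2 ≤ k) (hρ : ∀ ⦃u v⦄, G.Adj u v → ρ u ≠ ρ v) (hS : IsDomSet G S) :
    IsUCDomSet G (liftColoring S ρ) S := by
  refine ⟨fun v hv => ?_, fun d hd => ?_⟩
  · obtain ⟨d, hd, hvd⟩ := hS v hv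
    refine ⟨d, hd, hvd, ?_⟩
    simpa [liftColoring, hv, hd] using val_lt_liftColor_of_ne (hρ hvd)
  · simpa [liftColoring, hd] using one_le_liftColor hk (ρ d)

lemma exists_two_mul_sum_liftColoring_add_le [DecidableEq V] [NeZero k] (S : Finset V)
    (ρ : V → Fin k) :
    ∃ t : Fin k, 2 * ∑ v ∈ S, liftColoring S (fun v => ρ v + t) v ≤ 3 * (k - 1) * #S := by
  have hshift (v : V) : 2 * ∑ t : Fin k, liftColor (ρ v + t) = 3 * k * (k - 1) := by
    rw [← two_mul_sum_liftColor, ← Equiv.sum_comp (Equiv.addLeft (ρ v)) liftColor]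
    rfl
  have htotal : ∑ t : Fin k, 2 * ∑ v ∈ S, liftColoring S (fun v => ρ v + t) v =
      ∑ _t : Fin k, 3 * (k - 1) * #S := by
    calc ∑ t : Fin k, 2 * ∑ v ∈ S, liftColoring S (fun v => ρ v + t) v
        = ∑ v ∈ S, 2 * ∑ t : Fin k, liftColor (ρ v + t) := by
          simp_rw [mul_sum]
          rw [sum_comm]
          exact sum_congr rfl fun v hv => by simp [liftColoring, hv]
      _ = ∑ _t : Fin k, 3 * (k - 1) * #S := by
          simp only [hshift, sum_const, card_univ, Fintype.card_fin, smul_eq_mul]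
          ring
  obtain ⟨t, -, ht⟩ := exists_le_of_sum_le univ_nonempty htotal.le
  exact ⟨t, ht⟩

lemma colorable_chromNum [Fintype V] (G : SimpleGraph V) : G.Colorable (chromNum G) :=
  Nat.sInf_mem (s := {n | G.Colorable n}) ⟨Fintype.card V, G.colorable_of_fintype⟩

lemma two_le_chromNum [Fintype V] {G : SimpleGraph V} {u v : V} (huv : G.Adj u v) :
    2 ≤ chromNum G := by
  by_contra! h
  exact SimpleGraph.ne_bot_iff_exists_adj.mpr ⟨u, v, huv⟩ <|
    SimpleGraph.colorable_one_iff.mp ((colorable_chromNum G).mono (by omega))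

lemma exists_isDomSet_card_eq_domNum [Fintype V] (G : SimpleGraph V) :
    ∃ D : Finset V, IsDomSet G D ∧ #D = domNum V G :=
  Nat.sInf_mem (s := {n | ∃ D : Finset V, IsDomSet G D ∧ #D = n})
    ⟨Fintype.card V, univ, fun v hv => absurd (mem_univ v) hv, card_univ⟩

end

theorem stmt_16 {V : Type*} [Fintype V] (G : SimpleGraph V)
    (hconn : G.Connected) (hcard : 5 ≤ Fintype.card V) :
    ∃ c : V → ℕ, (∀ ⦃u v⦄, G.Adj u v → c u ≠ c v) ∧
      ∃ D : Finset V, IsUCDomSet G c D ∧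
        2 * ∑ v ∈ D, c v ≤ 3 * (chromNum G - 1) * domNum V G := by
  classical
  have : Nontrivial V := Fintype.one_lt_card_iff_nontrivial.mp (by omega)
  obtain ⟨u⟩ : Nonempty V := inferInstance
  obtain ⟨v, huv⟩ := hconn.preconnected.exists_adj_of_nontrivial u
  have hk := two_le_chromNum huv
  have : NeZero (chromNum G) := ⟨by omega⟩
  obtain ⟨ρ⟩ := colorable_chromNum G
  obtain ⟨S, hS, hScard⟩ := exists_isDomSet_card_eq_domNum G
  obtain ⟨t, ht⟩ := exists_two_mul_sum_liftColoring_add_le S (fun v => ρ v)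
  have hρt : ∀ ⦃u v⦄, G.Adj u v → ρ u + t ≠ ρ v + t := fun _ _ h => by simpa using ρ.valid h
  exact ⟨_, liftColoring_adj_ne hρt, S, isUCDomSet_liftColoring hk hρt hS, hScard ▸ ht⟩
end
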